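/- Let A_p(x,μ) = √(π/2)(x² + 2d(μ+iω₀))·[erf((μ+iω₀)/√(2ε)) - erf((μ₀+iω₀)/√(2ε))]·e^{(μ+iω₀)²/(2ε)} + 2d√ε·(1 - e^{(μ² - μ₀² + 2iω₀(μ-μ₀))/(2ε)}). Then A_p satisfies ε ∂_μ A_p = (μ+iω₀)A_p + √ε x² + ε d ∂_x² A_p with A_p(x,μ₀) = 0. -/

import Mathlib

/-- The entire complex error function `erf z = (2/√π) ∫₀^z e^{-t²} dt`,
parametrized along the straight segment from `0` to `z`. -/
noncomputable def cerf (z : ℂ) : ℂ :=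
  (2 / Real.sqrt Real.pi : ℝ) * z * ∫ t in (0:ℝ)..1, Complex.exp (-(z * t)^2)

/-!
Write `w = μ + iω₀` and `s = √(2ε)`. Differentiating under the integral sign gives
`erf' z = (2/√π) e^{-z²}`, so `Φ(w) = (erf(w/s) - erf(w₀/s)) e^{w²/s²}` satisfies
`Φ' = (2/√π)/s + (w/ε) Φ`. Since `A_p` is quadratic in `x`, `∂ₓ² A_p = 2√(π/2) Φ`, and the
product rule turns `ε ∂_w A_p` into `w A_p + √ε x² + ε d ∂ₓ² A_p`: the source term comes from
`√(π/2) (2/√π) ε / s = √ε`, and the two contributions `± 2d√ε w` cancel.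
-/

open Complex

lemma hasDerivAt_mul_exp_neg_mul_sq (z t : ℂ) :
    HasDerivAt (fun w => w * exp (-(w * t) ^ 2)) ((1 - 2 * z ^ 2 * t ^ 2) * exp (-(z * t) ^ 2)) z := by
  have h := (hasDerivAt_id z).mul (((hasDerivAt_mul_const t).pow 2).neg.cexp)
  refine h.congr_deriv ?_
  simp only [id_eq, Pi.neg_apply, Pi.pow_apply]
  push_cast
  ring

lemma integral_one_sub_mul_exp_neg_mul_sq (z : ℂ) :
    ∫ t in (0:ℝ)..1, (1 - 2 * z ^ 2 * t ^ 2) * exp (-(z * t) ^ 2) = exp (-z ^ 2) := by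
  have hderiv (t : ℝ) : HasDerivAt (fun u : ℝ => (u : ℂ) * exp (-(u * z) ^ 2))
      ((1 - 2 * z ^ 2 * t ^ 2) * exp (-(z * t) ^ 2)) t := by
    convert (hasDerivAt_mul_exp_neg_mul_sq (t : ℂ) z).comp_ofReal using 1
    ring_nf
  have := intervalIntegral.integral_eq_sub_of_hasDerivAt (a := 0) (b := 1) (fun t _ => hderiv t)
    (by apply Continuous.intervalIntegrable; fun_prop)
  simpa using this

lemma hasDerivAt_integral_mul_exp_neg_mul_sq (z : ℂ) :
    HasDerivAt (fun w : ℂ => ∫ t in (0:ℝ)..1, w * exp (-(w * t) ^ 2)) (exp (-z ^ 2)) z := by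
  set F' : ℂ → ℝ → ℂ := fun w t => (1 - 2 * w ^ 2 * t ^ 2) * exp (-(w * t) ^ 2)
  have hF' : Continuous (Function.uncurry F') := by fun_prop
  obtain ⟨C, hC⟩ := ((isCompact_closedBall z 1).prod isCompact_Icc).exists_bound_of_continuousOn
    (hF'.continuousOn (s := Metric.closedBall z 1 ×ˢ Set.Icc (0:ℝ) 1))
  have hbound : ∀ t ∈ Set.uIoc (0:ℝ) 1, ∀ w ∈ Metric.ball z 1, ‖F' w t‖ ≤ C := by
    intro t ht w hw
    rw [Set.uIoc_of_le zero_le_one] at ht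
    exact hC (w, t) ⟨Metric.ball_subset_closedBall hw, Set.Ioc_subset_Icc_self ht⟩
  have h := intervalIntegral.hasDerivAt_integral_of_dominated_loc_of_deriv_le
    (μ := MeasureTheory.volume) (F' := F') (bound := fun _ => C) (Metric.ball_mem_nhds z one_pos)
    (Filter.Eventually.of_forall fun w => (by fun_prop : Continuous _).aestronglyMeasurable)
    (by apply Continuous.intervalIntegrable; fun_prop)
    ((by fun_prop : Continuous (F' z)).aestronglyMeasurable)
    (Filter.Eventually.of_forall hbound) intervalIntegrable_const
    (Filter.Eventually.of_forall fun t _ w _ => hasDerivAt_mul_exp_neg_mul_sq w t)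
  simpa only [F', integral_one_sub_mul_exp_neg_mul_sq] using h.2

lemma hasDerivAt_cerf (z : ℂ) :
    HasDerivAt cerf ((2 / Real.sqrt Real.pi : ℝ) * exp (-z ^ 2)) z := by
  have h : cerf = fun w => (2 / Real.sqrt Real.pi : ℝ) * ∫ t in (0:ℝ)..1, w * exp (-(w * t) ^ 2) := by
    funext w
    rw [cerf, intervalIntegral.integral_const_mul, mul_assoc]
  rw [h]
  exact (hasDerivAt_integral_mul_exp_neg_mul_sq z).const_mul _

noncomputable def erfDiffExp (ε : ℝ) (w₀ w : ℂ) : ℂ :=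
  (cerf (w / (Real.sqrt (2 * ε) : ℂ)) - cerf (w₀ / (Real.sqrt (2 * ε) : ℂ))) *
    exp (w ^ 2 / (2 * (ε : ℂ)))

lemma hasDerivAt_erfDiffExp {ε : ℝ} (hε : 0 < ε) (w₀ w : ℂ) :
    HasDerivAt (erfDiffExp ε w₀)
      ((2 / Real.sqrt Real.pi : ℝ) / (Real.sqrt (2 * ε) : ℂ) + w / ε * erfDiffExp ε w₀ w) w := by
  set s : ℂ := (Real.sqrt (2 * ε) : ℂ)
  have hs2 : s ^ 2 = 2 * ε := by
    rw [← ofReal_pow, Real.sq_sqrt (by positivity)]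
    push_cast; rfl
  have hcerf := ((hasDerivAt_cerf (w / s)).comp w ((hasDerivAt_id w).div_const s)).sub_const
    (cerf (w₀ / s))
  have hexp := ((hasDerivAt_pow 2 w).div_const (2 * (ε : ℂ))).cexp
  refine (hcerf.mul hexp).congr_deriv ?_
  have hcancel : exp (-(w / s) ^ 2) * exp (w ^ 2 / (2 * ε)) = 1 := by
    rw [← exp_add, div_pow, hs2, neg_add_cancel, exp_zero]
  simp only [erfDiffExp, Function.comp_def, id_eq, Nat.cast_ofNat, Nat.add_one_sub_one, pow_one]
  linear_combination ((2 / Real.sqrt Real.pi : ℝ) / s : ℂ) * hcancel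

/-- `A_p(x, μ) = particularSolution ε d (μ₀ + iω₀) x (μ + iω₀)`; the exponent
`μ² - μ₀² + 2iω₀(μ - μ₀)` is `w² - w₀²`. -/
noncomputable def particularSolution (ε : ℝ) (d w₀ : ℂ) (x : ℝ) (w : ℂ) : ℂ :=
  (Real.sqrt (Real.pi / 2) : ℂ) * ((x : ℂ) ^ 2 + 2 * d * w) * erfDiffExp ε w₀ w
    + 2 * d * (Real.sqrt ε : ℂ) * (1 - exp ((w ^ 2 - w₀ ^ 2) / (2 * (ε : ℂ))))

lemma particularSolution_self (ε : ℝ) (d w₀ : ℂ) (x : ℝ) : particularSolution ε d w₀ x w₀ = 0 := by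
  simp [particularSolution, erfDiffExp]

lemma deriv_deriv_particularSolution (ε : ℝ) (d w₀ : ℂ) (x : ℝ) (w : ℂ) :
    deriv (fun x' => deriv (fun x'' => particularSolution ε d w₀ x'' w) x') x
      = 2 * (Real.sqrt (Real.pi / 2) : ℂ) * erfDiffExp ε w₀ w := by
  set a : ℂ := (Real.sqrt (Real.pi / 2) : ℂ) * erfDiffExp ε w₀ w
  have hfirst (y : ℝ) : HasDerivAt (fun x'' => particularSolution ε d w₀ x'' w) (2 * a * y) y := by
    have h := (((hasDerivAt_pow 2 (y : ℂ)).mul_const a).add_const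
      (particularSolution ε d w₀ 0 w)).comp_ofReal
    convert h using 1
    · funext x''
      simp only [particularSolution, a]
      push_cast
      ring
    · simp only [Nat.cast_ofNat, Nat.add_one_sub_one, pow_one]
      ring
  have hsecond : HasDerivAt (fun y : ℝ => 2 * a * y) (2 * a) x := by
    simpa using ((hasDerivAt_id (x : ℂ)).const_mul (2 * a)).comp_ofReal
  rw [funext fun y => (hfirst y).deriv, hsecond.deriv, mul_assoc]

lemma hasDerivAt_particularSolution {ε : ℝ} (hε : 0 < ε) (d w₀ : ℂ) (x : ℝ) (w : ℂ) :
    HasDerivAt (particularSolution ε d w₀ x)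
      ((w * particularSolution ε d w₀ x w + (Real.sqrt ε : ℂ) * (x : ℂ) ^ 2) / ε
        + d * (2 * (Real.sqrt (Real.pi / 2) : ℂ) * erfDiffExp ε w₀ w)) w := by
  have hconst : (Real.sqrt (Real.pi / 2) : ℂ) * (2 / Real.sqrt Real.pi : ℝ)
      / (Real.sqrt (2 * ε) : ℂ) * ε = Real.sqrt ε := by
    have h2 : Real.sqrt 2 ^ 2 = 2 := Real.sq_sqrt zero_le_two
    have hε2 : Real.sqrt ε ^ 2 = ε := Real.sq_sqrt hε.le
    have : 0 < Real.sqrt ε := Real.sqrt_pos.2 hε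
    have : 0 < Real.sqrt Real.pi := Real.sqrt_pos.2 Real.pi_pos
    have hreal : Real.sqrt (Real.pi / 2) * (2 / Real.sqrt Real.pi) / Real.sqrt (2 * ε) * ε
        = Real.sqrt ε := by
      rw [Real.sqrt_div Real.pi_pos.le, Real.sqrt_mul zero_le_two]
      field_simp
      linear_combination (-Real.sqrt 2 ^ 2) * hε2 - ε * h2
    exact_mod_cast hreal
  have hε0 : (ε : ℂ) ≠ 0 := ofReal_ne_zero.mpr hε.ne'
  have hpoly := ((hasDerivAt_id w).const_mul (2 * d)).const_add ((x : ℂ) ^ 2)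
  have hexp := (((hasDerivAt_pow 2 w).sub_const (w₀ ^ 2)).div_const (2 * (ε : ℂ))).cexp
  refine (((hpoly.const_mul _).mul (hasDerivAt_erfDiffExp hε w₀ w)).add
    ((hexp.const_sub 1).const_mul _)).congr_deriv ?_
  simp only [particularSolution, id_eq, Nat.cast_ofNat, Nat.add_one_sub_one, pow_one]
  field_simp
  linear_combination ((x : ℂ) ^ 2 + 2 * d * w) * hconst

theorem stmt_9_general (ε ω₀ μ₀ : ℝ) (hε : 0 < ε) (d : ℂ)
    (Ap : ℝ → ℝ → ℂ)
    (hAp : ∀ x μ : ℝ, Ap x μ =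
      (Real.sqrt (Real.pi/2) : ℂ) * ((x:ℂ)^2 + 2*d*((μ:ℂ) + Complex.I*ω₀)) *
        (cerf (((μ:ℂ) + Complex.I*ω₀)/(Real.sqrt (2*ε) : ℂ))
          - cerf (((μ₀:ℂ) + Complex.I*ω₀)/(Real.sqrt (2*ε) : ℂ))) *
        Complex.exp (((μ:ℂ) + Complex.I*ω₀)^2/(2*(ε:ℂ)))
      + 2*d*(Real.sqrt ε : ℂ) *
        (1 - Complex.exp (((μ:ℂ)^2 - (μ₀:ℂ)^2
            + 2*Complex.I*(ω₀:ℂ)*((μ:ℂ) - (μ₀:ℂ)))/(2*(ε:ℂ))))) :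
    (∀ x μ : ℝ, (ε:ℂ) * deriv (fun μ' => Ap x μ') μ
      = ((μ:ℂ) + Complex.I*ω₀) * Ap x μ
        + (Real.sqrt ε : ℂ) * (x:ℂ)^2
        + (ε:ℂ) * d * deriv (fun x' => deriv (fun x'' => Ap x'' μ) x') x)
    ∧ ∀ x : ℝ, Ap x μ₀ = 0 := by
  have hAp' : Ap = fun x (μ : ℝ) => particularSolution ε d (μ₀ + I * ω₀) x (μ + I * ω₀) := by
    funext x μ
    rw [hAp, particularSolution, erfDiffExp]
    ring_nf
  subst hAp'
  refine ⟨fun x μ => ?_, fun x => particularSolution_self ε d _ x⟩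
  have hμ := ((hasDerivAt_particularSolution hε d (μ₀ + I * ω₀) x (μ + I * ω₀)).comp_add_const
    (μ : ℂ) (I * ω₀)).comp_ofReal
  have hε0 : (ε : ℂ) ≠ 0 := ofReal_ne_zero.mpr hε.ne'
  rw [hμ.deriv, deriv_deriv_particularSolution]
  field_simp

theorem stmt_9 (ε ω₀ μ₀ : ℝ) (hε : 0 < ε) (hω₀ : 0 < ω₀) (d : ℂ)
    (Ap : ℝ → ℝ → ℂ)
    (hAp : ∀ x μ : ℝ, Ap x μ =
      (Real.sqrt (Real.pi/2) : ℂ) * ((x:ℂ)^2 + 2*d*((μ:ℂ) + Complex.I*ω₀)) *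
        (cerf (((μ:ℂ) + Complex.I*ω₀)/(Real.sqrt (2*ε) : ℂ))
          - cerf (((μ₀:ℂ) + Complex.I*ω₀)/(Real.sqrt (2*ε) : ℂ))) *
        Complex.exp (((μ:ℂ) + Complex.I*ω₀)^2/(2*(ε:ℂ)))
      + 2*d*(Real.sqrt ε : ℂ) *
        (1 - Complex.exp (((μ:ℂ)^2 - (μ₀:ℂ)^2
            + 2*Complex.I*(ω₀:ℂ)*((μ:ℂ) - (μ₀:ℂ)))/(2*(ε:ℂ))))) :
    (∀ x μ : ℝ, (ε:ℂ) * deriv (fun μ' => Ap x μ') μ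
      = ((μ:ℂ) + Complex.I*ω₀) * Ap x μ
        + (Real.sqrt ε : ℂ) * (x:ℂ)^2
        + (ε:ℂ) * d * deriv (fun x' => deriv (fun x'' => Ap x'' μ) x') x)
    ∧ ∀ x : ℝ, Ap x μ₀ = 0 :=
  stmt_9_general ε ω₀ μ₀ hε d Ap hAp
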